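/- arXiv:math/9901042 — 6 statements merged into one kernel-verified Lean document; each statement's English description precedes it below -/
import Mathlib

section
/- Let M be the free monoid on {α, β} with the involution x ↦ x̄ that reverses words and swaps α ↔ β. On the free complex vector space A with basis M, define a bilinear product ⊙ by x ⊙ y = Σ_{(a,g,b) : x = a·g, y = ḡ·b} a·b, summing over all factorizations. Then ⊙ is associative. -/
/-- Words on the alphabet `{α, β}`, encoded as lists of booleans
(`true` = α, `false` = β); concatenation is the free monoid structure. -/
abbrev Wd := List Bool

/-- The reverse-and-swap involution `x ↦ x̄`. -/
def bar (w : Wd) : Wd := (w.map not).reverse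

/-- The element `x ⊙ y = ∑_{x = a·g, y = ḡ·b} a·b` of the free vector space on words,
for words `x, y`: the factorizations `x = a·g` are indexed by `k = length g`. -/
noncomputable def wp (x y : Wd) : Wd →₀ ℂ :=
  ∑ k ∈ Finset.range (min x.length y.length + 1),
    if y.take k = bar (x.drop (x.length - k))
    then Finsupp.single (x.take (x.length - k) ++ y.drop k) (1 : ℂ) else 0

/-- The bilinear extension of `⊙` to the free vector space `A` on words. -/
noncomputable def odot (f g : Wd →₀ ℂ) : Wd →₀ ℂ :=
  f.sum fun x cx => g.sum fun y cy => (cx * cy) • wp x y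

/-!
Write `x ⊙ y` as a sum over `k` of the term in which the suffix of `x` of length `k` cancels
against the prefix of `y`. Splitting this sum where a block `w` of `x ++ w` is used up gives
`(x ++ w) ⊙ z = x · (partial cancellations of w against z) + [z = w̄ r] x ⊙ r`, and in particular
`(x c) ⊙ (l y) = x c l y + [l = c̄] x ⊙ y`. Expanding `(x c ⊙ l y) ⊙ z` and `x c ⊙ (l y ⊙ z)` by
these rules, all terms match except `(x ⊙ y) ⊙ z` and `x ⊙ (y ⊙ z)`, one on each side; so
associativity on words follows by induction on the middle word, and bilinearity extends it to `A`.
-/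

open Finsupp

theorem Finsupp.bilinear_assoc_of_single {α R : Type*} [CommSemiring R]
    (μ : (α →₀ R) →ₗ[R] (α →₀ R) →ₗ[R] (α →₀ R))
    (h : ∀ x y z, μ (μ (single x 1) (single y 1)) (single z 1) =
      μ (single x 1) (μ (single y 1) (single z 1)))
    (f g k : α →₀ R) : μ (μ f g) k = μ f (μ g k) := by
  have : μ.compr₂ μ = (LinearMap.llcomp R _ _ _ ∘ₗ μ).compl₂ μ := by
    ext x y z a
    simpa using congr($(h x y z) a)
  exact congr($this f g k)

lemma length_bar (w : Wd) : (bar w).length = w.length := by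
  simp [bar]

lemma bar_append (u v : Wd) : bar (u ++ v) = bar v ++ bar u := by
  simp [bar]

/-- The contribution to `x ⊙ y` of the factorization whose cancelled part has length `k`. -/
noncomputable def cancelTerm (x y : Wd) (k : ℕ) : Wd →₀ ℂ :=
  if y.take k = bar (x.drop (x.length - k))
  then single (x.take (x.length - k) ++ y.drop k) 1 else 0

lemma cancelTerm_zero (x y : Wd) : cancelTerm x y 0 = single (x ++ y) 1 := by
  simp [cancelTerm, bar]

lemma cancelTerm_eq_zero {x y : Wd} {k : ℕ} (hmin : min x.length y.length < k)
    (hmax : k ≤ max x.length y.length) : cancelTerm x y k = 0 := by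
  refine if_neg fun h => ?_
  have := congrArg List.length h
  simp only [List.length_take, length_bar, List.length_drop] at this
  omega

lemma wp_eq_sum_cancelTerm (x y : Wd) {n : ℕ} (hmin : min x.length y.length ≤ n)
    (hmax : n ≤ max x.length y.length) :
    wp x y = ∑ k ∈ Finset.range (n + 1), cancelTerm x y k := by
  refine Finset.sum_subset (Finset.range_subset_range.2 (by omega)) fun k hk hk' => ?_
  simp only [Finset.mem_range] at hk hk'
  exact cancelTerm_eq_zero (by omega) (by omega)

lemma cancelTerm_append_of_le (x w z : Wd) {k : ℕ} (hk : k ≤ w.length) :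
    cancelTerm (x ++ w) z k = mapDomain (x ++ ·) (cancelTerm w z k) := by
  have hx : (x ++ w).length - k = x.length + (w.length - k) := by simp; omega
  unfold cancelTerm
  rw [hx, List.drop_length_add_append, List.take_length_add_append]
  split_ifs <;> simp

lemma cancelTerm_append_length_add (x w z : Wd) (u : ℕ) :
    cancelTerm (x ++ w) z (w.length + u) =
      if z.take w.length = bar w then cancelTerm x (z.drop w.length) u else 0 := by
  have hx : (x ++ w).length - (w.length + u) = x.length - u := by simp; omega
  have hcond : z.take (w.length + u) = bar ((x ++ w).drop (x.length - u)) ↔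
      z.take w.length = bar w ∧ (z.drop w.length).take u = bar (x.drop (x.length - u)) := by
    rw [List.drop_append_of_le_length (by omega), bar_append, List.take_add]
    by_cases hz : w.length ≤ z.length
    · exact ⟨fun h => List.append_inj h (by simp [length_bar]; omega),
        fun ⟨h₁, h₂⟩ => h₁ ▸ h₂ ▸ rfl⟩
    · refine iff_of_false (fun h => ?_) (fun h => ?_)
      · have := congrArg List.length h
        simp [length_bar] at this
        omega
      · have := congrArg List.length h.1
        simp [length_bar] at this
        omega
  unfold cancelTerm
  rw [hx, if_congr hcond rfl rfl, ite_and, List.take_append_of_le_length (by omega), List.drop_drop]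

/-- The terms of `w ⊙ z` in which `w` is not cancelled completely. -/
noncomputable def partialWp (w z : Wd) : Wd →₀ ℂ :=
  ∑ k ∈ Finset.range w.length, cancelTerm w z k

lemma wp_append (x w z : Wd) :
    wp (x ++ w) z = mapDomain (x ++ ·) (partialWp w z) +
      if z.take w.length = bar w then wp x (z.drop w.length) else 0 := by
  rw [wp_eq_sum_cancelTerm _ _ (n := (x ++ w).length) (by omega) (by omega),
    List.length_append, add_comm x.length, add_assoc, Finset.sum_range_add, partialWp,
    mapDomain_finsetSum, wp_eq_sum_cancelTerm x _ (n := x.length) (by omega) (by omega)]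
  congr 1
  · exact Finset.sum_congr rfl fun k hk =>
      cancelTerm_append_of_le x w z (Finset.mem_range.1 hk).le
  · simp only [cancelTerm_append_length_add]
    split_ifs <;> simp

lemma partialWp_cons (l : Bool) (y z : Wd) :
    partialWp (l :: y) z = mapDomain (l :: ·) (wp y z) := by
  rw [partialWp, List.length_cons, wp_eq_sum_cancelTerm y z (n := y.length) (by omega) (by omega),
    mapDomain_finsetSum]
  exact Finset.sum_congr rfl fun k hk =>
    cancelTerm_append_of_le [l] y z (Nat.lt_succ_iff.1 (Finset.mem_range.1 hk))

lemma wp_nil_left (z : Wd) : wp [] z = single z 1 := by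
  rw [wp_eq_sum_cancelTerm [] z (n := 0) (by simp) (by simp)]
  simp [cancelTerm_zero]

lemma wp_nil_right (x : Wd) : wp x [] = single x 1 := by
  rw [wp_eq_sum_cancelTerm x [] (n := 0) (by simp) (by simp)]
  simp [cancelTerm_zero]

lemma wp_cons_left (l : Bool) (y z : Wd) :
    wp (l :: y) z = mapDomain (l :: ·) (wp y z) +
      if z.take (y.length + 1) = bar (l :: y) then single (z.drop (y.length + 1)) 1 else 0 := by
  refine (wp_append [] (l :: y) z).trans ?_
  rw [partialWp_cons, wp_nil_left]
  exact congrArg₂ _ mapDomain_id rfl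

lemma wp_concat_cons (x : Wd) (c l : Bool) (y : Wd) :
    wp (x ++ [c]) (l :: y) = single ((x ++ [c]) ++ l :: y) 1 + if l = !c then wp x y else 0 := by
  rw [wp_append]
  simp [partialWp, cancelTerm_zero, bar]

noncomputable def odotₗ : (Wd →₀ ℂ) →ₗ[ℂ] (Wd →₀ ℂ) →ₗ[ℂ] (Wd →₀ ℂ) :=
  linearCombination ℂ fun x => linearCombination ℂ (wp x)

lemma odot_eq_odotₗ (f g : Wd →₀ ℂ) : odot f g = odotₗ f g := by
  simp only [odot, odotₗ, linearCombination_apply, LinearMap.finsupp_sum_apply,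
    LinearMap.smul_apply, smul_sum, smul_smul]

lemma odotₗ_single_single (x y : Wd) : odotₗ (single x 1) (single y 1) = wp x y := by
  simp [odotₗ]

lemma odotₗ_single_nil : odotₗ (single [] 1) = LinearMap.id := by
  ext w : 2
  simp [odotₗ_single_single, wp_nil_left]

lemma odotₗ_single_concat_mapDomain_cons (x : Wd) (c l : Bool) (v : Wd →₀ ℂ) :
    odotₗ (single (x ++ [c]) 1) (mapDomain (l :: ·) v) =
      mapDomain ((x ++ [c]) ++ ·) (mapDomain (l :: ·) v) +
        if l = !c then odotₗ (single x 1) v else 0 := by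
  induction v using Finsupp.induction_linear with
  | zero => simp
  | add v₁ v₂ h₁ h₂ =>
    simp only [mapDomain_add, map_add, h₁, h₂]
    split_ifs <;> abel
  | single w b =>
    rw [← smul_single_one w b, mapDomain_smul, map_smul, mapDomain_single, odotₗ_single_single,
      wp_concat_cons, mapDomain_smul, mapDomain_single, map_smul, odotₗ_single_single]
    split_ifs <;> simp

lemma odotₗ_wp_single (x y z : Wd) :
    odotₗ (wp x y) (single z 1) = odotₗ (single x 1) (wp y z) := by
  induction y generalizing x with
  | nil => rw [wp_nil_right, wp_nil_left, odotₗ_single_single]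
  | cons l y ih =>
    rcases List.eq_nil_or_concat' x with rfl | ⟨x, c, rfl⟩
    · rw [wp_nil_left, odotₗ_single_single, odotₗ_single_nil, LinearMap.id_apply]
    · rw [wp_concat_cons, map_add, LinearMap.add_apply, odotₗ_single_single, wp_append,
        partialWp_cons, List.length_cons, wp_cons_left, map_add,
        odotₗ_single_concat_mapDomain_cons]
      rw [add_right_comm, apply_ite (odotₗ · (single z 1)),
        apply_ite (odotₗ (single (x ++ [c]) 1)), ih, odotₗ_single_single, map_zero, map_zero,
        LinearMap.zero_apply]

/-- The product `⊙` is associative. -/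
theorem stmt5 (f g h : Wd →₀ ℂ) : odot (odot f g) h = odot f (odot g h) := by
  simp only [odot_eq_odotₗ]
  refine bilinear_assoc_of_single odotₗ (fun x y z => ?_) f g h
  rw [odotₗ_single_single, odotₗ_single_single, odotₗ_wp_single]
end

section
/- Let M be the free monoid on {α, β} with set product {x} ∘ {y} = { a·b : ∃ g ∈ M, x = a·g, y = ḡ·b }, where x ↦ x̄ reverses words and swaps α ↔ β. Let D be the set of words beginning with α and E the complement (words beginning with β, together with the empty word e). Then for r, s ∈ {βαβ, βα²β, βα³β} with r ≠ s, we have (r ∘ E) ∩ (s ∘ E) = ∅, where r ∘ E = ∪_{y∈E} {r} ∘ {y}. -/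
def la : Bool := true
def lb : Bool := false

/-- The set product `{x} ∘ {y} = { a·b : ∃ g, x = a·g, y = ḡ·b }`. -/
def sp (x y : Wd) : Set Wd :=
  {w | ∃ a g b : Wd, x = a ++ g ∧ y = bar g ++ b ∧ w = a ++ b}

/-- The set product extended to sets of words by unions. -/
def spS (X Y : Set Wd) : Set Wd := ⋃ x ∈ X, ⋃ y ∈ Y, sp x y

/-- `E`: the empty word together with the words beginning with `β`. -/
def E : Set Wd := {w | w = [] ∨ ∃ t, w = lb :: t}

lemma prefix_of_mem_spS (r w : Wd) (hlast : ∃ u, r.reverse = lb :: u)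
    (hw : w ∈ spS {r} E) : r <+: w := by
  simp only [spS, Set.mem_iUnion, Set.mem_singleton_iff, exists_prop] at hw
  obtain ⟨x, rfl, y, hy, a, g, b, hx, hyb, rfl⟩ := hw
  rcases hg : g.reverse with _ | ⟨c, t⟩
  · have : g = [] := by simpa using congrArg List.reverse hg
    subst this
    simp only [List.append_nil] at hx
    subst hx
    exact List.prefix_append _ _
  · exfalso
    obtain ⟨u, hu⟩ := hlast
    have hc : c = lb := by
      have : x.reverse = c :: (t ++ a.reverse) := by
        rw [hx, List.reverse_append, hg]; simp
      rw [hu] at this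
      exact (List.cons_eq_cons.mp this).1.symm
    have hbg : bar g = not c :: t.map not := by
      rw [bar, ← List.map_reverse, hg]; simp
    rw [hbg, hc] at hyb
    rcases hy with rfl | ⟨t', ht'⟩
    · simp at hyb
    · rw [ht'] at hyb
      have := (List.cons_eq_cons.mp hyb).1
      simp [lb] at this

/-- For distinct `r, s` among `βαβ, βα²β, βα³β`, the sets `r ∘ E` and `s ∘ E`
are disjoint. -/
theorem stmt9 (r s : Wd)
    (hr : r ∈ ({[lb, la, lb], [lb, la, la, lb], [lb, la, la, la, lb]} : Set Wd))
    (hs : s ∈ ({[lb, la, lb], [lb, la, la, lb], [lb, la, la, la, lb]} : Set Wd))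
    (hrs : r ≠ s) :
    Disjoint (spS {r} E) (spS {s} E) := by
  rw [Set.disjoint_left]
  intro w hw1 hw2
  have h1 : r <+: w :=
    prefix_of_mem_spS r w (by rcases hr with rfl | rfl | rfl <;> exact ⟨_, rfl⟩) hw1
  have h2 : s <+: w :=
    prefix_of_mem_spS s w (by rcases hs with rfl | rfl | rfl <;> exact ⟨_, rfl⟩) hw2
  have hp := List.prefix_or_prefix_of_prefix h1 h2
  rcases hr with rfl | rfl | rfl <;> rcases hs with rfl | rfl | rfl <;>
    simp_all [List.IsPrefix, la, lb]
end

section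
/- Let M be the free monoid on {α, β} with set product as above, let D = {words beginning with α} and F = {words beginning with β and ending with α}. Then (F ∘ D) ∩ D = ∅, i.e., for every x ∈ F and y ∈ D, no element of {x} ∘ {y} begins with α. -/
/-- If `x` begins with `β` and ends with `α`, and `y` begins with `α`, then no
element of `{x} ∘ {y}` begins with `α` (i.e. `(F ∘ D) ∩ D = ∅`). -/
theorem stmt10 (x y : Wd) (hx1 : ∃ t, x = lb :: t) (hx2 : ∃ t, x = t ++ [la])
    (hy : ∃ t, y = la :: t) :
    ∀ z ∈ sp x y, ¬ ∃ t, z = la :: t := by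
  rintro z ⟨a, g, b, hxa, hyb, hz⟩ ⟨t, ht⟩
  obtain ⟨t1, ht1⟩ := hx1
  obtain ⟨t2, ht2⟩ := hx2
  obtain ⟨t3, ht3⟩ := hy
  cases a with
  | nil =>
    simp only [List.nil_append] at hxa hz
    subst hxa hz
    rw [ht2] at hyb
    simp [bar, la, lb] at hyb ht3
    rw [hyb] at ht3
    simp [la] at ht3
  | cons c a' =>
    rw [ht1] at hxa
    simp only [List.cons_append, List.cons.injEq] at hxa
    rw [hz] at ht
    simp only [List.cons_append, List.cons.injEq] at ht
    rw [ht.1] at hxa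
    simp [la, lb] at hxa
end

section
/- Let H be a (complex) Hilbert space, x a self-adjoint bounded operator on H, p and q orthogonal projections with p + q = 1, and ξ ∈ H a unit vector. Assume p x p = 0 and ⟨q ξ, ξ⟩ ≤ δ for some 0 ≤ δ < 1/2. Then |⟨x ξ, ξ⟩| ≤ 2·√(δ − δ²)·‖x‖. -/
/-!
Split `ξ = p ξ + q ξ` orthogonally, with `a = ‖p ξ‖ ≥ b = ‖q ξ‖` because `b² ≤ δ < 1/2`.
Since `p x p = 0`, the form `w ↦ re ⟪x w, w⟫` on `span {p ξ, q ξ}` has no `(p ξ, p ξ)` term,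
so `⟪x ξ, ξ⟫ = 2A + C` with `A = re ⟪x p ξ, q ξ⟫`, `C = re ⟪x q ξ, q ξ⟫`. Evaluating it on
`b p ξ ± a q ξ`, of squared norm `2a²b²`, gives `2ab|A| + a²|C| ≤ 2a²b²‖x‖`, and `b ≤ a` turns this
into `|2A + C| ≤ 2ab‖x‖`. Finally `ab = √(b² - b⁴) ≤ √(δ - δ²)` as `t ↦ t - t²` increases on
`[0, 1/2]`.
-/

open RCLike
open scoped InnerProductSpace

theorem abs_two_mul_add_le_of_abs_le {a b A C N : ℝ} (hb : 0 < b) (hba : b ≤ a)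
    (hplus : |2 * a * b * A + a ^ 2 * C| ≤ N * (2 * a ^ 2 * b ^ 2))
    (hminus : |-(2 * a * b * A) + a ^ 2 * C| ≤ N * (2 * a ^ 2 * b ^ 2)) :
    |2 * A + C| ≤ 2 * N * a * b := by
  have hab : 0 < a * b := mul_pos (hb.trans_le hba) hb
  have hsum : 2 * a * b * |A| + a ^ 2 * |C| ≤ N * (2 * a ^ 2 * b ^ 2) := by
    obtain ⟨hplus_lo, hplus_hi⟩ := abs_le.1 hplus
    obtain ⟨hminus_lo, hminus_hi⟩ := abs_le.1 hminus
    rcases abs_cases A with ⟨hA, -⟩ | ⟨hA, -⟩ <;> rcases abs_cases C with ⟨hC, -⟩ | ⟨hC, -⟩ <;>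
      rw [hA, hC] <;> linarith
  refine le_of_mul_le_mul_left ?_ hab
  calc a * b * |2 * A + C| ≤ a * b * (2 * |A| + |C|) := by
        gcongr
        exact (abs_add_le _ _).trans_eq (by rw [abs_mul, abs_two])
    _ = 2 * a * b * |A| + a * b * |C| := by ring
    _ ≤ 2 * a * b * |A| + a ^ 2 * |C| := by gcongr; nlinarith
    _ ≤ a * b * (2 * N * a * b) := by linarith

theorem mul_le_sqrt_sub_sq {a b δ : ℝ} (hab : a ^ 2 + b ^ 2 = 1)
    (hbδ : b ^ 2 ≤ δ) (hδ : δ ≤ 1 / 2) : a * b ≤ √(δ - δ ^ 2) := by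
  refine Real.le_sqrt_of_sq_le ?_
  nlinarith [mul_nonneg (sub_nonneg.2 hbδ) (by linarith : (0 : ℝ) ≤ 1 - δ - b ^ 2)]

section

variable {𝕜 E : Type*} [RCLike 𝕜] [NormedAddCommGroup E] [InnerProductSpace 𝕜 E]

theorem LinearMap.IsSymmetric.re_inner_map_smul_add_smul {T : E →L[𝕜] E}
    (hT : (T : E →ₗ[𝕜] E).IsSymmetric) (u v : E) (s t : ℝ) :
    re ⟪T ((s : 𝕜) • u + (t : 𝕜) • v), (s : 𝕜) • u + (t : 𝕜) • v⟫_𝕜 =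
      s ^ 2 * re ⟪T u, u⟫_𝕜 + 2 * s * t * re ⟪T u, v⟫_𝕜 + t ^ 2 * re ⟪T v, v⟫_𝕜 := by
  have hvu : re ⟪T v, u⟫_𝕜 = re ⟪T u, v⟫_𝕜 := by
    rw [show ⟪T u, v⟫_𝕜 = ⟪u, T v⟫_𝕜 from hT u v, ← inner_conj_symm, conj_re]
  simp only [map_add, map_smul, inner_add_left, inner_add_right, inner_smul_left,
    inner_smul_right, conj_ofReal, map_add, re_ofReal_mul, hvu]
  ring

theorem norm_smul_add_smul_sq_of_inner_eq_zero {u v : E} (huv : ⟪u, v⟫_𝕜 = 0) (s t : ℝ) :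
    ‖(s : 𝕜) • u + (t : 𝕜) • v‖ ^ 2 = s ^ 2 * ‖u‖ ^ 2 + t ^ 2 * ‖v‖ ^ 2 := by
  have h : ⟪(s : 𝕜) • u, (t : 𝕜) • v⟫_𝕜 = 0 := by simp [inner_smul_left, inner_smul_right, huv]
  rw [sq, norm_add_sq_eq_norm_sq_add_norm_sq_of_inner_eq_zero _ _ h, norm_smul, norm_smul,
    norm_ofReal, norm_ofReal]
  rw [← sq_abs s, ← sq_abs t]
  ring

theorem ContinuousLinearMap.abs_re_inner_apply_self_le (T : E →L[𝕜] E) (w : E) :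
    |re ⟪T w, w⟫_𝕜| ≤ ‖T‖ * ‖w‖ ^ 2 :=
  calc |re ⟪T w, w⟫_𝕜| ≤ ‖⟪T w, w⟫_𝕜‖ := abs_re_le_norm _
    _ ≤ ‖T w‖ * ‖w‖ := norm_inner_le_norm _ _
    _ ≤ ‖T‖ * ‖w‖ * ‖w‖ := by gcongr; exact T.le_opNorm w
    _ = ‖T‖ * ‖w‖ ^ 2 := by ring

theorem LinearMap.IsSymmetric.abs_re_inner_map_add_le {T : E →L[𝕜] E}
    (hT : (T : E →ₗ[𝕜] E).IsSymmetric) {u v : E} (huv : ⟪u, v⟫_𝕜 = 0)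
    (hu : re ⟪T u, u⟫_𝕜 = 0) (hvu : ‖v‖ ≤ ‖u‖) :
    |re ⟪T (u + v), u + v⟫_𝕜| ≤ 2 * ‖T‖ * ‖u‖ * ‖v‖ := by
  rcases (norm_nonneg v).eq_or_lt with hv | hv
  · simp [norm_eq_zero.1 hv.symm, hu]
  have hform (s t : ℝ) : re ⟪T ((s : 𝕜) • u + (t : 𝕜) • v), (s : 𝕜) • u + (t : 𝕜) • v⟫_𝕜 =
      2 * s * t * re ⟪T u, v⟫_𝕜 + t ^ 2 * re ⟪T v, v⟫_𝕜 := by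
    rw [hT.re_inner_map_smul_add_smul, hu, mul_zero, zero_add]
  -- Test the numerical-range bound on `‖v‖ • u ± ‖u‖ • v`, which have squared norm `2 ‖u‖² ‖v‖²`.
  have htest (t : ℝ) : |2 * ‖v‖ * t * re ⟪T u, v⟫_𝕜 + t ^ 2 * re ⟪T v, v⟫_𝕜| ≤
      ‖T‖ * (‖v‖ ^ 2 * ‖u‖ ^ 2 + t ^ 2 * ‖v‖ ^ 2) := by
    rw [← hform, ← norm_smul_add_smul_sq_of_inner_eq_zero huv]
    exact T.abs_re_inner_apply_self_le _
  have hsplit := hform 1 1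
  simp only [ofReal_one, one_smul, mul_one, one_pow, one_mul] at hsplit
  rw [hsplit]
  refine abs_two_mul_add_le_of_abs_le hv hvu ?_ ?_
  · convert htest ‖u‖ using 2 <;> ring
  · convert htest (-‖u‖) using 2 <;> ring

theorem LinearMap.IsSymmetric.norm_inner_apply_self {T : E →L[𝕜] E}
    (hT : (T : E →ₗ[𝕜] E).IsSymmetric) (w : E) : ‖⟪T w, w⟫_𝕜‖ = |re ⟪T w, w⟫_𝕜| := by
  conv_lhs => rw [← hT.coe_reApplyInnerSelf_apply, T.reApplyInnerSelf_apply]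
  exact norm_ofReal _

section ComplementaryProjections

variable {p q : E →L[𝕜] E}

theorem inner_apply_apply_eq_zero_of_add_eq_one
    (hp : (p : E →ₗ[𝕜] E).IsSymmetric) (hp2 : p ∘L p = p) (hpq : p + q = 1) (v w : E) :
    ⟪p v, q w⟫_𝕜 = 0 := by
  have hpq_zero : p (q w) = 0 := by
    rw [eq_sub_of_add_eq' hpq]
    simpa [sub_eq_zero] using congr($hp2 w).symm
  rw [show ⟪p v, q w⟫_𝕜 = ⟪v, p (q w)⟫_𝕜 from hp v (q w), hpq_zero, inner_zero_right]

theorem norm_apply_sq_add_norm_apply_sq_of_add_eq_one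
    (hp : (p : E →ₗ[𝕜] E).IsSymmetric) (hp2 : p ∘L p = p) (hpq : p + q = 1) (v : E) :
    ‖p v‖ ^ 2 + ‖q v‖ ^ 2 = ‖v‖ ^ 2 := by
  have h := norm_add_sq_eq_norm_sq_add_norm_sq_of_inner_eq_zero _ _
    (inner_apply_apply_eq_zero_of_add_eq_one hp hp2 hpq v v)
  have hsplit : p v + q v = v := by simpa using congr($hpq v)
  rw [hsplit, ← sq, ← sq, ← sq] at h
  exact h.symm

theorem re_inner_apply_self_eq_norm_sq_of_add_eq_one
    (hp : (p : E →ₗ[𝕜] E).IsSymmetric) (hp2 : p ∘L p = p) (hpq : p + q = 1) (v : E) :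
    re ⟪q v, v⟫_𝕜 = ‖q v‖ ^ 2 := by
  have horth := inner_apply_apply_eq_zero_of_add_eq_one hp hp2 hpq v v
  calc re ⟪q v, v⟫_𝕜 = re ⟪q v, p v + q v⟫_𝕜 := by simpa using congr(re ⟪q v, $hpq v⟫_𝕜).symm
    _ = ‖q v‖ ^ 2 := by
      rw [inner_add_right, ← inner_conj_symm, horth, map_zero, zero_add, inner_self_eq_norm_sq]

end ComplementaryProjections

end

theorem stmt12_general {H : Type*} [NormedAddCommGroup H] [InnerProductSpace ℂ H]
    [CompleteSpace H]
    (x p q : H →L[ℂ] H) (hx : IsSelfAdjoint x)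
    (hp : IsSelfAdjoint p) (hp2 : p ∘L p = p)
    (hpq : p + q = 1)
    (ξ : H) (hξ : ‖ξ‖ = 1)
    (hpxp : p ∘L x ∘L p = 0)
    (δ : ℝ) (hδ : δ < 1 / 2)
    (hqξ : (inner ℂ (q ξ) ξ : ℂ).re ≤ δ) :
    ‖(inner ℂ (x ξ) ξ : ℂ)‖ ≤ 2 * Real.sqrt (δ - δ ^ 2) * ‖x‖ := by
  have hsplit : p ξ + q ξ = ξ := by simpa using congr($hpq ξ)
  have horth := inner_apply_apply_eq_zero_of_add_eq_one hp.isSymmetric hp2 hpq ξ ξ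
  have hpyth : ‖p ξ‖ ^ 2 + ‖q ξ‖ ^ 2 = 1 := by
    rw [norm_apply_sq_add_norm_apply_sq_of_add_eq_one hp.isSymmetric hp2 hpq, hξ, one_pow]
  have hqδ : ‖q ξ‖ ^ 2 ≤ δ := by
    rwa [← re_to_complex, re_inner_apply_self_eq_norm_sq_of_add_eq_one hp.isSymmetric hp2 hpq]
      at hqξ
  have hqp : ‖q ξ‖ ≤ ‖p ξ‖ := le_of_sq_le_sq (by linarith) (norm_nonneg _)
  have hvanish : re ⟪x (p ξ), p ξ⟫_ℂ = 0 := by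
    rw [show ⟪x (p ξ), p ξ⟫_ℂ = ⟪(p ∘L x ∘L p) ξ, ξ⟫_ℂ from (hp.isSymmetric _ _).symm, hpxp]
    simp
  have hbound := hx.isSymmetric.abs_re_inner_map_add_le horth hvanish hqp
  rw [hsplit] at hbound
  calc ‖⟪x ξ, ξ⟫_ℂ‖ = |re ⟪x ξ, ξ⟫_ℂ| := hx.isSymmetric.norm_inner_apply_self ξ
    _ ≤ 2 * ‖x‖ * ‖p ξ‖ * ‖q ξ‖ := hbound
    _ = 2 * (‖p ξ‖ * ‖q ξ‖) * ‖x‖ := by ring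
    _ ≤ 2 * √(δ - δ ^ 2) * ‖x‖ := by
        gcongr
        exact mul_le_sqrt_sub_sq hpyth hqδ hδ.le

/-- If `x` is a self-adjoint bounded operator, `p + q = 1` are orthogonal
projections with `p x p = 0`, and `ξ` is a unit vector with `⟨q ξ, ξ⟩ ≤ δ < 1/2`,
then `|⟨x ξ, ξ⟩| ≤ 2 √(δ - δ²) ‖x‖`. -/
theorem stmt12 {H : Type*} [NormedAddCommGroup H] [InnerProductSpace ℂ H]
    [CompleteSpace H]
    (x p q : H →L[ℂ] H) (hx : IsSelfAdjoint x)
    (hp : IsSelfAdjoint p) (hp2 : p ∘L p = p)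
    (hq : IsSelfAdjoint q) (hq2 : q ∘L q = q)
    (hpq : p + q = 1)
    (ξ : H) (hξ : ‖ξ‖ = 1)
    (hpxp : p ∘L x ∘L p = 0)
    (δ : ℝ) (hδ0 : 0 ≤ δ) (hδ : δ < 1 / 2)
    (hqξ : (inner ℂ (q ξ) ξ : ℂ).re ≤ δ) :
    ‖(inner ℂ (x ξ) ξ : ℂ)‖ ≤ 2 * Real.sqrt (δ - δ ^ 2) * ‖x‖ :=
  stmt12_general x p q hx hp hp2 hpq ξ hξ hpxp δ hδ hqξ
end

section
/- Let H be a Hilbert space, f : B(H) → B(H) a unital completely positive map, p + q = 1 orthogonal projections, and x = x* ∈ B(H) with p x p = 0. If ‖f(q)‖ ≤ δ < 1/2, then ‖f(x)‖ ≤ 2·√(δ − δ²)·‖x‖. -/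
/-!
For `0 ≤ t ≤ 1` put `q = 1 - p`, `w = t p + q` and `w' = t p - q`. Since `p x p = 0`, the
`q x q` terms cancel in `((1 + t) / 2) w x w - ((1 - t) / 2) w' x w' = t x`, while
`w² = w'² = t² p + q`; conjugating `-‖x‖ ≤ x ≤ ‖x‖` by `w` and `w'` therefore gives
`± t x ≤ ‖x‖ (t² p + q)`. Applying the unital positive map `f` and using `f q ≤ δ` yields
`t ‖f x‖ ≤ ‖x‖ (t² + (1 - t²) δ)`, and `t = √(δ / (1 - δ))` gives the bound `2 √(δ - δ²) ‖x‖`.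
-/

open scoped ComplexOrder

/-- A matrix `M` with entries in `B(H)` is positive (as an operator on `H^n`):
for every vector `ξ : Fin n → H`, the quadratic form `∑ᵢⱼ ⟨M i j (ξ j), ξ i⟩`
is a nonnegative real number. -/
def PosMat {H : Type*} [NormedAddCommGroup H] [InnerProductSpace ℂ H]
    {n : ℕ} (M : Matrix (Fin n) (Fin n) (H →L[ℂ] H)) : Prop :=
  ∀ ξ : Fin n → H,
    0 ≤ (∑ i, ∑ j, (inner ℂ (M i j (ξ j)) (ξ i) : ℂ)).re ∧
    (∑ i, ∑ j, (inner ℂ (M i j (ξ j)) (ξ i) : ℂ)).im = 0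

open Filter Topology in
theorem le_two_mul_sqrt_mul_of_forall {a K δ : ℝ} (hδ0 : 0 ≤ δ) (hδ : δ ≤ 1 / 2)
    (h : ∀ t, 0 < t → t ≤ 1 → t * a ≤ K * (t ^ 2 + (1 - t ^ 2) * δ)) :
    a ≤ 2 * √(δ - δ ^ 2) * K := by
  rcases hδ0.eq_or_lt with rfl | hδpos
  · have hlim : Tendsto (fun t : ℝ => K * t) (𝓝[>] 0) (𝓝 0) := by
      simpa using ((continuous_const_mul K).tendsto 0).mono_left nhdsWithin_le_nhds
    have hle : ∀ᶠ t in 𝓝[>] (0 : ℝ), a ≤ K * t := by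
      filter_upwards [Ioc_mem_nhdsGT one_pos] with t ⟨ht0, ht1⟩
      have := h t ht0 ht1
      rw [mul_zero, add_zero] at this
      nlinarith
    simpa using ge_of_tendsto hlim hle
  · set u := √δ
    set v := √(1 - δ)
    have hu : 0 < u := Real.sqrt_pos.mpr hδpos
    have hv : 0 < v := Real.sqrt_pos.mpr (by linarith)
    have hu2 : u ^ 2 = δ := Real.sq_sqrt hδ0
    have hv2 : v ^ 2 = 1 - δ := Real.sq_sqrt (by linarith)
    have huv : u ≤ v := by
      apply Real.sqrt_le_sqrt; linarith
    have hsqrt : √(δ - δ ^ 2) = u * v := by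
      rw [← Real.sqrt_mul hδ0]; ring_nf
    have ht := h (u / v) (by positivity) ((div_le_one hv).mpr huv)
    have hval : (u / v) ^ 2 + (1 - (u / v) ^ 2) * δ = 2 * u ^ 2 := by
      rw [div_pow, hu2, hv2]
      field_simp [show (1 - δ) ≠ 0 by linarith]
      ring
    rw [hval, div_mul_eq_mul_div, div_le_iff₀ hv] at ht
    rw [hsqrt]
    refine le_of_mul_le_mul_left ?_ hu
    linear_combination ht

section StarOrderedRing

variable {A : Type*} [Ring A] [StarRing A] [PartialOrder A] [StarOrderedRing A] [Algebra ℝ A]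
  [StarModule ℝ A] [PosSMulMono ℝ A]

theorem smul_le_of_mul_mul_eq_zero {p x : A} (hp : IsStarProjection p)
    (hpxp : p * x * p = 0) {c : ℝ} (hxc : x ≤ algebraMap ℝ A c) (hcx : -algebraMap ℝ A c ≤ x)
    {t : ℝ} (ht0 : 0 ≤ t) (ht1 : t ≤ 1) :
    t • x ≤ c • (t ^ 2 • p + (1 - p)) := by
  set w := t • p + (1 - p)
  set w' := t • p - (1 - p)
  have htp : IsSelfAdjoint (t • p) := (IsSelfAdjoint.all t).smul hp.isSelfAdjoint
  have hq : IsSelfAdjoint (1 - p) := .sub (.one A) hp.isSelfAdjoint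
  have hw : IsSelfAdjoint w := htp.add hq
  have hw' : IsSelfAdjoint w' := htp.sub hq
  have hpxp' : p * (x * p) = 0 := by rw [← mul_assoc, hpxp]
  have hww : w * w = t ^ 2 • p + (1 - p) := by
    simp only [w, mul_add, add_mul, mul_sub, sub_mul, smul_mul_assoc, mul_smul_comm,
      hp.isIdempotentElem.eq, one_mul, mul_one]
    module
  have hww' : w' * w' = t ^ 2 • p + (1 - p) := by
    simp only [w', mul_sub, sub_mul, smul_mul_assoc, mul_smul_comm, hp.isIdempotentElem.eq,
      one_mul, mul_one]
    module
  have hcomb : ((1 + t) / 2) • (w * x * w) - ((1 - t) / 2) • (w' * x * w') = t • x := by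
    simp only [w, w', mul_add, add_mul, mul_sub, sub_mul, smul_mul_assoc, mul_smul_comm,
      mul_assoc, hpxp', one_mul, mul_one]
    module
  have hcw : ∀ u : A, u * algebraMap ℝ A c * u = c • (u * u) := fun u => by
    rw [← Algebra.commutes, mul_assoc, Algebra.smul_def]
  have h₁ : w * x * w ≤ c • (w * w) := hcw w ▸ hw.conjugate_le_conjugate hxc
  have h₂ : -(c • (w' * w')) ≤ w' * x * w' := by
    simpa [neg_mul, mul_neg, hcw] using hw'.conjugate_le_conjugate hcx
  calc t • x = ((1 + t) / 2) • (w * x * w) - ((1 - t) / 2) • (w' * x * w') := hcomb.symm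
    _ ≤ ((1 + t) / 2) • (c • (w * w)) + ((1 - t) / 2) • (c • (w' * w')) := by
      rw [sub_eq_add_neg, ← smul_neg]
      exact add_le_add (smul_le_smul_of_nonneg_left h₁ (by linarith))
        (smul_le_smul_of_nonneg_left (neg_le.mp h₂) (by linarith))
    _ = c • (t ^ 2 • p + (1 - p)) := by rw [hww, hww']; module

end StarOrderedRing

section CStarAlgebra

variable {A B : Type*} [CStarAlgebra A] [PartialOrder A] [StarOrderedRing A]
  [CStarAlgebra B] [PartialOrder B] [StarOrderedRing B]

theorem CStarAlgebra.norm_le_of_neg_algebraMap_le_of_le_algebraMap {a : A} {r : ℝ} (hr : 0 ≤ r)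
    (h₁ : -algebraMap ℝ A r ≤ a) (h₂ : a ≤ algebraMap ℝ A r) : ‖a‖ ≤ r := by
  obtain hA | hA := subsingleton_or_nontrivial A
  · simpa [Subsingleton.elim a 0] using hr
  have ha : IsSelfAdjoint a := by
    simpa using (IsSelfAdjoint.of_nonneg (neg_le_iff_add_nonneg.mp h₁)).sub
      (IsSelfAdjoint.algebraMap A (.all r))
  rw [← map_neg] at h₁
  rcases CStarAlgebra.norm_or_neg_norm_mem_spectrum ha with h | h
  · exact (le_algebraMap_iff_spectrum_le ha).mp h₂ _ h
  · linarith [(algebraMap_le_iff_le_spectrum ha).mp h₁ _ h]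

theorem PositiveLinearMap.mul_norm_apply_le_of_mul_mul_eq_zero (f : A →ₚ[ℂ] B) (hf1 : f 1 = 1)
    {p x : A} (hp : IsStarProjection p) (hx : IsSelfAdjoint x) (hpxp : p * x * p = 0) {δ : ℝ}
    (hfq : ‖f (1 - p)‖ ≤ δ) {t : ℝ} (ht0 : 0 ≤ t) (ht1 : t ≤ 1) :
    t * ‖f x‖ ≤ ‖x‖ * (t ^ 2 + (1 - t ^ 2) * δ) := by
  have ht2 : 0 ≤ 1 - t ^ 2 := sub_nonneg.mpr (pow_le_one₀ ht0 ht1)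
  have hfqδ : f (1 - p) ≤ algebraMap ℝ B δ :=
    (IsSelfAdjoint.le_algebraMap_norm_self (.of_nonneg (f.map_nonneg hp.one_sub_nonneg))).trans
      (algebraMap_mono B hfq)
  have key : ∀ y : A, IsSelfAdjoint y → p * y * p = 0 →
      t • f y ≤ algebraMap ℝ B (‖y‖ * (t ^ 2 + (1 - t ^ 2) * δ)) := by
    intro y hy hpyp
    have hle := smul_le_of_mul_mul_eq_zero hp hpyp hy.le_algebraMap_norm_self
      hy.neg_algebraMap_norm_le_self ht0 ht1
    calc t • f y = f (t • y) := (map_smul_of_tower f t y).symm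
      _ ≤ f (‖y‖ • (t ^ 2 • p + (1 - p))) := OrderHomClass.mono f hle
      _ = ‖y‖ • (t ^ 2 • (1 : B) + (1 - t ^ 2) • f (1 - p)) := by
        simp only [map_smul_of_tower, map_add, map_sub, hf1]
        module
      _ ≤ ‖y‖ • (t ^ 2 • (1 : B) + (1 - t ^ 2) • algebraMap ℝ B δ) := by
        gcongr
      _ = algebraMap ℝ B (‖y‖ * (t ^ 2 + (1 - t ^ 2) * δ)) := by
        simp only [Algebra.algebraMap_eq_smul_one]
        module
  have hδ : 0 ≤ δ := (norm_nonneg _).trans hfq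
  have hupper := key x hx hpxp
  have hlower := key (-x) hx.neg (by simp [hpxp])
  rw [map_neg, smul_neg, norm_neg] at hlower
  rw [← Real.norm_of_nonneg ht0, ← norm_smul, Real.norm_of_nonneg ht0]
  exact CStarAlgebra.norm_le_of_neg_algebraMap_le_of_le_algebraMap (by positivity)
    (neg_le.mp hlower) hupper

theorem PositiveLinearMap.norm_apply_le_of_mul_mul_eq_zero (f : A →ₚ[ℂ] B) (hf1 : f 1 = 1)
    {p x : A} (hp : IsStarProjection p) (hx : IsSelfAdjoint x) (hpxp : p * x * p = 0) {δ : ℝ}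
    (hδ : δ ≤ 1 / 2) (hfq : ‖f (1 - p)‖ ≤ δ) :
    ‖f x‖ ≤ 2 * √(δ - δ ^ 2) * ‖x‖ :=
  le_two_mul_sqrt_mul_of_forall ((norm_nonneg _).trans hfq) hδ fun _ ht0 ht1 =>
    f.mul_norm_apply_le_of_mul_mul_eq_zero hf1 hp hx hpxp hfq ht0.le ht1

end CStarAlgebra

lemma posMat_one_iff {H : Type*} [NormedAddCommGroup H] [InnerProductSpace ℂ H] [CompleteSpace H]
    (z : H →L[ℂ] H) : PosMat !![z] ↔ 0 ≤ z := by
  rw [ContinuousLinearMap.nonneg_iff_isPositive, ContinuousLinearMap.isPositive_iff_complex]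
  simp only [PosMat, Fin.sum_univ_one, Matrix.of_apply, Matrix.cons_val', Matrix.cons_val_fin_one]
  simp only [eq_comm, and_comm, RCLike.re_to_complex, Complex.ext_iff, Complex.ofReal_re,
    Complex.ofReal_im, true_and]
  exact ⟨fun h x => h fun _ => x, fun h ξ => h (ξ 0)⟩

theorem stmt15_general {H : Type*} [NormedAddCommGroup H] [InnerProductSpace ℂ H]
    [CompleteSpace H]
    (f : (H →L[ℂ] H) →ₗ[ℂ] (H →L[ℂ] H))
    (hf1 : f 1 = 1)
    (hcp : ∀ (n : ℕ) (M : Matrix (Fin n) (Fin n) (H →L[ℂ] H)),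
      PosMat M → PosMat (M.map f))
    (x p q : H →L[ℂ] H) (hx : IsSelfAdjoint x)
    (hp : IsSelfAdjoint p) (hp2 : p ∘L p = p)
    (hpq : p + q = 1)
    (hpxp : p ∘L x ∘L p = 0)
    (δ : ℝ) (hδ : δ < 1 / 2) (hfq : ‖f q‖ ≤ δ) :
    ‖f x‖ ≤ 2 * Real.sqrt (δ - δ ^ 2) * ‖x‖ := by
  have hf_nonneg (z : H →L[ℂ] H) (hz : 0 ≤ z) : 0 ≤ f z := by
    have hmap : (!![z]).map f = !![f z] := by
      ext i j; fin_cases i; fin_cases j; rfl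
    simpa only [hmap, posMat_one_iff] using hcp 1 !![z] ((posMat_one_iff z).mpr hz)
  rw [eq_sub_of_add_eq' hpq] at hfq
  exact (PositiveLinearMap.mk₀ f hf_nonneg).norm_apply_le_of_mul_mul_eq_zero hf1 ⟨hp2, hp⟩ hx
    (by rw [mul_assoc]; exact hpxp) hδ.le hfq

/-- If `f : B(H) → B(H)` is a unital completely positive map, `p + q = 1` are
orthogonal projections, `x = x*` with `p x p = 0`, and `‖f q‖ ≤ δ < 1/2`, then
`‖f x‖ ≤ 2 √(δ - δ²) ‖x‖`. -/
theorem stmt15 {H : Type*} [NormedAddCommGroup H] [InnerProductSpace ℂ H]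
    [CompleteSpace H]
    (f : (H →L[ℂ] H) →ₗ[ℂ] (H →L[ℂ] H))
    (hf1 : f 1 = 1)
    (hcp : ∀ (n : ℕ) (M : Matrix (Fin n) (Fin n) (H →L[ℂ] H)),
      PosMat M → PosMat (M.map f))
    (x p q : H →L[ℂ] H) (hx : IsSelfAdjoint x)
    (hp : IsSelfAdjoint p) (hp2 : p ∘L p = p)
    (hq : IsSelfAdjoint q) (hq2 : q ∘L q = q)
    (hpq : p + q = 1)
    (hpxp : p ∘L x ∘L p = 0)
    (δ : ℝ) (hδ : δ < 1 / 2) (hfq : ‖f q‖ ≤ δ) :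
    ‖f x‖ ≤ 2 * Real.sqrt (δ - δ ^ 2) * ‖x‖ :=
  stmt15_general f hf1 hcp x p q hx hp hp2 hpq hpxp δ hδ hfq
end

section
/- Let M be the free monoid on {α, β} with the reverse-and-swap involution x ↦ x̄, and A the free ℂ-vector space on M with the product x ⊙ y = Σ_{x = a·g, y = ḡ·b} a·b. Let E_n ⊆ A be the span of words of length ≤ n. If J : A → A is an algebra homomorphism from the free (concatenation) algebra structure to (A, ⊙) with J(e) = e, J(α) = α, J(β) = β, then (J − Id)(E_n) ⊆ E_{n−1} for all n ≥ 1; consequently J restricted to each E_n is bijective and J : A → A is a linear isomorphism. -/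
/-- The concatenation (free-algebra) product on `A`. -/
noncomputable def cdot (f g : Wd →₀ ℂ) : Wd →₀ ℂ :=
  f.sum fun x cx => g.sum fun y cy => Finsupp.single (x ++ y) (cx * cy)

/-- `E n`: the span of the words of length at most `n`. -/
noncomputable def En (n : ℕ) : Submodule ℂ (Wd →₀ ℂ) :=
  Submodule.span ℂ ((fun w => Finsupp.single w (1 : ℂ)) '' {w : Wd | w.length ≤ n})

/-!
`J` is determined on words by multiplicativity: `J (x :: t) = x ⊙ J t` for a letter `x`.
Multiplying by a letter under `⊙` yields the concatenation plus terms two letters shorter, so by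
induction `J - 1` lowers word length by one. Invertibility on each `E n` then follows by induction
on `n`: since `J f - f ∈ E (n - 1)`, both injectivity and surjectivity on `E n` reduce to those
on `E (n - 1)`.
-/

namespace LinearMap

variable {R M : Type*} [Ring R] [AddCommGroup M] [Module R M]

structure IsFiltrationUnipotent (T : M →ₗ[R] M) (E : ℕ → Submodule R M) : Prop where
  apply_eq_self : ∀ f ∈ E 0, T f = f
  apply_sub_mem : ∀ n, ∀ f ∈ E (n + 1), T f - f ∈ E n

namespace IsFiltrationUnipotent

variable {T : M →ₗ[R] M} {E : ℕ → Submodule R M}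

theorem mapsTo (hT : T.IsFiltrationUnipotent E) (hE : Monotone E) (n : ℕ) :
    Set.MapsTo T (E n) (E n) := by
  intro f hf
  cases n with
  | zero => rwa [hT.apply_eq_self f hf]
  | succ n =>
    rw [← sub_add_cancel (T f) f]
    exact add_mem (hE n.le_succ (hT.apply_sub_mem n f hf)) hf

theorem eq_zero_of_apply_eq_zero (hT : T.IsFiltrationUnipotent E) {n : ℕ} {f : M}
    (hf : f ∈ E n) (h0 : T f = 0) : f = 0 := by
  induction n generalizing f with
  | zero => rw [← hT.apply_eq_self f hf, h0]
  | succ n ih =>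
    have hneg : -f ∈ E n := by simpa [h0] using hT.apply_sub_mem n f hf
    exact ih (neg_mem_iff.mp hneg) h0

theorem surjOn (hT : T.IsFiltrationUnipotent E) (hE : Monotone E) (n : ℕ) :
    Set.SurjOn T (E n) (E n) := by
  induction n with
  | zero => exact fun g hg => ⟨g, hg, hT.apply_eq_self g hg⟩
  | succ n ih =>
    intro g hg
    -- correct `g` by a preimage of the lower-order error `T g - g`
    obtain ⟨h, hh, hTh⟩ := ih (hT.apply_sub_mem n g hg)
    refine ⟨g - h, sub_mem hg (hE n.le_succ hh), ?_⟩
    rw [map_sub, hTh, sub_sub_cancel]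

theorem bijOn (hT : T.IsFiltrationUnipotent E) (hE : Monotone E) (n : ℕ) :
    Set.BijOn T (E n) (E n) := by
  refine ⟨hT.mapsTo hE n, fun f hf g hg hfg => ?_, hT.surjOn hE n⟩
  exact sub_eq_zero.mp <|
    hT.eq_zero_of_apply_eq_zero (sub_mem hf hg) (by rw [map_sub, hfg, sub_self])

theorem bijective (hT : T.IsFiltrationUnipotent E) (hE : Monotone E)
    (hexh : ∀ f, ∃ n, f ∈ E n) : Function.Bijective T := by
  refine ⟨(injective_iff_map_eq_zero T).mpr fun f h0 => ?_, fun g => ?_⟩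
  · obtain ⟨n, hf⟩ := hexh f
    exact hT.eq_zero_of_apply_eq_zero hf h0
  · obtain ⟨n, hg⟩ := hexh g
    obtain ⟨f, -, hfg⟩ := hT.surjOn hE n hg
    exact ⟨f, hfg⟩

end IsFiltrationUnipotent

end LinearMap

open Finsupp

theorem En_eq_supported (n : ℕ) : En n = supported ℂ ℂ {w : Wd | w.length ≤ n} :=
  (supported_eq_span_single ℂ _).symm

theorem mem_En_iff {n : ℕ} {f : Wd →₀ ℂ} :
    f ∈ En n ↔ ∀ w ∈ f.support, w.length ≤ n := by
  rw [En_eq_supported, mem_supported]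
  rfl

theorem En_mono : Monotone En := fun _ _ hmn _ hf =>
  mem_En_iff.mpr fun w hw => (mem_En_iff.mp hf w hw).trans hmn

theorem exists_mem_En (f : Wd →₀ ℂ) : ∃ n, f ∈ En n :=
  ⟨f.support.sup List.length, mem_En_iff.mpr fun _ => Finset.le_sup⟩

theorem single_mem_En {w : Wd} {n : ℕ} (h : w.length ≤ n) (c : ℂ) : single w c ∈ En n := by
  rw [En_eq_supported]
  exact single_mem_supported ℂ c h

theorem wp_mem_En (x y : Wd) : wp x y ∈ En (x.length + y.length) := by
  refine Submodule.sum_mem _ fun k _ => ?_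
  split
  · refine single_mem_En ?_ 1
    simp only [List.length_append, List.length_take, List.length_drop]
    omega
  · exact zero_mem _

theorem bar_nil : bar [] = [] := rfl

/-- Only the overlap `k = 0` survives at top length; every cancelling overlap removes two
letters. -/
theorem wp_sub_single_append_mem_En (x y : Wd) :
    wp x y - single (x ++ y) 1 ∈ En (x.length + y.length - 2) := by
  rw [wp, Finset.sum_range_succ']
  simp only [List.take_zero, Nat.sub_zero, List.drop_length, bar_nil, if_true, List.take_length,
    List.drop_zero, add_sub_cancel_right]
  refine Submodule.sum_mem _ fun k hk => ?_
  rw [Finset.mem_range] at hk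
  split
  · refine single_mem_En ?_ 1
    simp only [List.length_append, List.length_take, List.length_drop]
    omega
  · exact zero_mem _

theorem odot_single_one_eq_linearCombination (x : Wd) (g : Wd →₀ ℂ) :
    odot (single x 1) g = linearCombination ℂ (wp x) g := by
  rw [odot, sum_single_index] <;> simp [linearCombination_apply]

theorem linearCombination_wp_mem_En (x : Wd) {m : ℕ} {g : Wd →₀ ℂ} (hg : g ∈ En m) :
    linearCombination ℂ (wp x) g ∈ En (x.length + m) := by
  rw [linearCombination_apply]
  refine Submodule.sum_mem _ fun y hy => Submodule.smul_mem _ _ ?_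
  exact En_mono (by have := mem_En_iff.mp hg y hy; omega) (wp_mem_En x y)

theorem cdot_single_one_single_one (x y : Wd) :
    cdot (single x 1) (single y 1) = single (x ++ y) 1 := by
  rw [cdot, sum_single_index, sum_single_index] <;> simp

section Homomorphism

variable {J : (Wd →₀ ℂ) →ₗ[ℂ] (Wd →₀ ℂ)}

theorem apply_single_cons (hJl : ∀ x : Bool, J (single [x] 1) = single [x] 1)
    (hJm : ∀ f g : Wd →₀ ℂ, J (cdot f g) = odot (J f) (J g)) (x : Bool) (t : Wd) :
    J (single (x :: t) 1) = linearCombination ℂ (wp [x]) (J (single t 1)) := by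
  rw [← List.singleton_append, ← cdot_single_one_single_one, hJm, hJl,
    odot_single_one_eq_linearCombination]

theorem apply_single_sub_mem_En (hJe : J (single [] 1) = single [] 1)
    (hJl : ∀ x : Bool, J (single [x] 1) = single [x] 1)
    (hJm : ∀ f g : Wd →₀ ℂ, J (cdot f g) = odot (J f) (J g)) :
    ∀ w : Wd, J (single w 1) - single w 1 ∈ En (w.length - 1)
  | [] => by rw [hJe, sub_self]; exact zero_mem _
  | [x] => by rw [hJl, sub_self]; exact zero_mem _
  | x :: y :: s => by
    set t := y :: s
    have ih := apply_single_sub_mem_En hJe hJl hJm t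
    have hsplit : J (single (x :: t) 1) - single (x :: t) 1
        = (wp [x] t - single ([x] ++ t) 1)
          + linearCombination ℂ (wp [x]) (J (single t 1) - single t 1) := by
      rw [apply_single_cons hJl hJm, map_sub, linearCombination_single, one_smul]
      simp only [List.singleton_append]
      abel
    rw [hsplit]
    refine add_mem (En_mono ?_ (wp_sub_single_append_mem_En [x] t))
      (En_mono ?_ (linearCombination_wp_mem_En [x] ih))
    all_goals simp only [t, List.length_cons, List.length_nil]; omega

theorem isFiltrationUnipotent_En (hJe : J (single [] 1) = single [] 1)
    (hJl : ∀ x : Bool, J (single [x] 1) = single [x] 1)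
    (hJm : ∀ f g : Wd →₀ ℂ, J (cdot f g) = odot (J f) (J g)) :
    J.IsFiltrationUnipotent En where
  apply_eq_self f hf := by
    have hle : En 0 ≤ LinearMap.ker (J - LinearMap.id) := by
      refine Submodule.span_le.mpr ?_
      rintro _ ⟨w, hw, rfl⟩
      rw [List.length_eq_zero_iff.mp (Nat.le_zero.mp hw)]
      simp [hJe]
    simpa [sub_eq_zero] using hle hf
  apply_sub_mem n f hf := by
    have hle : En (n + 1) ≤ (En n).comap (J - LinearMap.id) := by
      refine Submodule.span_le.mpr ?_
      rintro _ ⟨w, hw, rfl⟩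
      exact En_mono (by simp only [Set.mem_ofPred_eq] at hw; omega)
        (apply_single_sub_mem_En hJe hJl hJm w)
    exact hle hf

end Homomorphism

/-- If `J` is a linear map which is an algebra homomorphism from the
concatenation algebra to `(A, ⊙)` fixing `e`, `α`, `β`, then
`(J - Id)(E n) ⊆ E (n-1)` for all `n ≥ 1`; consequently `J` restricted to each
`E n` is bijective, and `J` is a linear isomorphism of `A`. -/
theorem stmt19 (J : (Wd →₀ ℂ) →ₗ[ℂ] (Wd →₀ ℂ))
    (hJe : J (Finsupp.single ([] : Wd) 1) = Finsupp.single ([] : Wd) 1)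
    (hJa : J (Finsupp.single [la] 1) = Finsupp.single [la] 1)
    (hJb : J (Finsupp.single [lb] 1) = Finsupp.single [lb] 1)
    (hJm : ∀ f g : Wd →₀ ℂ, J (cdot f g) = odot (J f) (J g)) :
    (∀ n : ℕ, 1 ≤ n → ∀ f ∈ En n, J f - f ∈ En (n - 1)) ∧
    (∀ n : ℕ, Set.BijOn J (En n) (En n)) ∧
    Function.Bijective J := by
  have hJl : ∀ x : Bool, J (single [x] 1) = single [x] 1 := by
    rintro (_ | _)
    exacts [hJb, hJa]
  have hU := isFiltrationUnipotent_En hJe hJl hJm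
  refine ⟨fun n hn f hf => ?_, hU.bijOn En_mono, hU.bijective En_mono exists_mem_En⟩
  obtain ⟨m, rfl⟩ := Nat.exists_eq_add_of_le' hn
  exact hU.apply_sub_mem m f hf
end
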